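/- arXiv:2008.07099 — 4 statements merged into one kernel-verified Lean document; each statement's English description precedes it below -/
import Mathlib

section
/- Let M be a Q_p-Banach space with unit ball M^o, equipped with a continuous action of Z_p by isometries via an operator γ (the action of a topological generator). Suppose (γ-1)^m(M^o) ⊆ p·M^o for some m ≥ 0. Then the operator log(γ) = Σ_{m≥0} (-1)^m (γ-1)^{m+1}/(m+1) converges on M and its image satisfies log(γ)(M) ⊆ (γ-1)(M). -/
/-!
Rescaling by powers of `p`, the hypothesis says that `(γ - 1) ^ m` maps the ball of radius
`|p| ^ k` into the ball of radius `|p| ^ (k + 1)`, so `‖(γ - 1) ^ (2 m)‖ ≤ |p| < 1` in operator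
norm. Hence `‖(γ - 1) ^ n‖` decays geometrically, which beats the growth `|1 / (n + 1)|_p ≤ n + 1`
of the coefficients: `L = ∑ (-1) ^ n (γ - 1) ^ n / (n + 1)` converges in `End M`, and
`log γ = (γ - 1) ∘ L`.
-/

namespace ContinuousLinearMap

variable {𝕜 E : Type*}

theorem norm_pow_apply_le_of_norm_apply_le [NormedField 𝕜] [SeminormedAddCommGroup E]
    [NormedSpace 𝕜 E] {A : E →L[𝕜] E} {ϖ : 𝕜} (hϖ : ϖ ≠ 0)
    (hA : ∀ x, ‖x‖ ≤ 1 → ‖A x‖ ≤ ‖ϖ‖) (k : ℕ) {x : E} (hx : ‖x‖ ≤ 1) :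
    ‖(A ^ k) x‖ ≤ ‖ϖ‖ ^ k := by
  induction k generalizing x with
  | zero => simpa using hx
  | succ k ih =>
    have hy : ‖ϖ⁻¹ • A x‖ ≤ 1 := by
      rw [norm_smul, norm_inv, inv_mul_le_iff₀ (norm_pos_iff.2 hϖ), mul_one]
      exact hA x hx
    calc ‖(A ^ (k + 1)) x‖ = ‖ϖ‖ * ‖(A ^ k) (ϖ⁻¹ • A x)‖ := by
          rw [pow_succ, mul_apply_eq_comp, map_smul, norm_smul, norm_inv, mul_inv_cancel_left₀
            (norm_ne_zero_iff.2 hϖ)]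
      _ ≤ ‖ϖ‖ ^ (k + 1) := by
          rw [pow_succ']
          gcongr
          exact ih hy

theorem opNorm_pow_succ_le_of_norm_apply_le [NontriviallyNormedField 𝕜]
    [SeminormedAddCommGroup E] [NormedSpace 𝕜 E] {A : E →L[𝕜] E} {ϖ : 𝕜} (hϖ : ϖ ≠ 0)
    (hϖ₁ : ‖ϖ‖ < 1) (hA : ∀ x, ‖x‖ ≤ 1 → ‖A x‖ ≤ ‖ϖ‖) (k : ℕ) :
    ‖A ^ (k + 1)‖ ≤ ‖ϖ‖ ^ k := by
  refine opNorm_le_of_shell' one_pos (by positivity) hϖ₁ fun x hx hx₁ => ?_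
  rw [one_mul] at hx
  calc ‖(A ^ (k + 1)) x‖ ≤ ‖ϖ‖ ^ (k + 1) := norm_pow_apply_le_of_norm_apply_le hϖ hA _ hx₁.le
    _ ≤ ‖ϖ‖ ^ k * ‖x‖ := by rw [pow_succ]; gcongr

end ContinuousLinearMap

theorem Padic.norm_natCast_inv_le {p : ℕ} [Fact p.Prime] (k : ℕ) : ‖(k : ℚ_[p])⁻¹‖ ≤ k := by
  rcases eq_or_ne k 0 with rfl | hk
  · simp
  rw [norm_inv, Padic.norm_eq_zpow_neg_valuation (Nat.cast_ne_zero.2 hk),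
    Padic.valuation_natCast, zpow_neg, inv_inv, zpow_natCast]
  exact_mod_cast Nat.le_of_dvd (Nat.pos_of_ne_zero hk) pow_padicValNat_dvd

theorem exists_norm_pow_le_mul_geometric_of_norm_pow_lt_one {R : Type*} [NormedRing R] {a : R}
    {N : ℕ} (h : ‖a ^ N‖ < 1) : ∃ C σ : ℝ, 0 ≤ C ∧ 0 ≤ σ ∧ σ < 1 ∧ ∀ n, ‖a ^ n‖ ≤ C * σ ^ n := by
  rcases eq_or_ne N 0 with rfl | hN
  · -- `‖1‖ < 1` forces `‖1‖ = 0`, since `‖1‖ ≤ ‖1‖ ^ 2`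
    have h1 : ‖(1 : R)‖ = 0 := by
      have := norm_mul_le (1 : R) 1
      rw [one_mul] at this
      rw [pow_zero] at h
      nlinarith [norm_nonneg (1 : R)]
    refine ⟨0, 0, le_rfl, le_rfl, zero_lt_one, fun n => ?_⟩
    simpa [h1] using norm_mul_le (a ^ n) 1
  -- `σ ^ N ≥ ‖a ^ N‖`; the `max` keeps `σ` positive, as `C` divides by its powers
  set σ := max (‖a ^ N‖ ^ (N⁻¹ : ℝ)) 2⁻¹
  have hσ₀ : 0 < σ := lt_max_of_lt_right (by norm_num)
  have hσ₁ : σ < 1 := max_lt (Real.rpow_lt_one (norm_nonneg _) h (by positivity)) (by norm_num)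
  have hσN : ‖a ^ N‖ ≤ σ ^ N := by
    conv_lhs => rw [← Real.rpow_inv_natCast_pow (norm_nonneg (a ^ N)) hN]
    gcongr
    exact le_max_left _ _
  set C := ∑ r ∈ Finset.range N, ‖a ^ r‖ / σ ^ r
  have hrem : ∀ r < N, ‖a ^ r‖ ≤ C * σ ^ r := fun r hr => by
    rw [← div_le_iff₀ (by positivity)]
    exact Finset.single_le_sum (f := fun r => ‖a ^ r‖ / σ ^ r) (fun _ _ => by positivity)
      (Finset.mem_range.2 hr)
  have hblock : ∀ q, ∀ r < N, ‖a ^ (r + N * q)‖ ≤ C * σ ^ (r + N * q) := by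
    intro q r hr
    induction q with
    | zero => simpa using hrem r hr
    | succ q ih =>
      calc ‖a ^ (r + N * (q + 1))‖ = ‖a ^ (r + N * q) * a ^ N‖ := by
            rw [← pow_add, mul_add_one, add_assoc]
        _ ≤ C * σ ^ (r + N * q) * σ ^ N := (norm_mul_le _ _).trans (by gcongr)
        _ = C * σ ^ (r + N * (q + 1)) := by ring
  refine ⟨C, σ, by positivity, hσ₀.le, hσ₁, fun n => ?_⟩
  rw [← Nat.mod_add_div n N]
  exact hblock _ _ (Nat.mod_lt _ (Nat.pos_of_ne_zero hN))

theorem summable_neg_one_pow_div_smul_pow {p : ℕ} [Fact p.Prime] {R : Type*} [NormedRing R]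
    [NormedSpace ℚ_[p] R] [CompleteSpace R] {a : R} {N : ℕ} (h : ‖a ^ N‖ < 1) :
    Summable fun n : ℕ => ((-1 : ℚ_[p]) ^ n / ((n : ℚ_[p]) + 1)) • a ^ n := by
  obtain ⟨C, σ, hC, hσ₀, hσ₁, hbound⟩ := exists_norm_pow_le_mul_geometric_of_norm_pow_lt_one h
  have hσ : ‖σ‖ < 1 := by rwa [Real.norm_of_nonneg hσ₀]
  have hmajorant : Summable fun n : ℕ => C * ((n : ℝ) ^ 1 * σ ^ n + σ ^ n) :=
    ((summable_pow_mul_geometric_of_norm_lt_one 1 hσ).add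
      (summable_geometric_of_lt_one hσ₀ hσ₁)).mul_left C
  refine hmajorant.of_norm_bounded fun n => ?_
  have hcoeff : ‖(-1 : ℚ_[p]) ^ n / ((n : ℚ_[p]) + 1)‖ ≤ n + 1 := by
    simpa [div_eq_mul_inv] using Padic.norm_natCast_inv_le (p := p) (n + 1)
  calc ‖((-1 : ℚ_[p]) ^ n / ((n : ℚ_[p]) + 1)) • a ^ n‖ ≤ (n + 1) * (C * σ ^ n) :=
        (norm_smul_le _ _).trans (mul_le_mul hcoeff (hbound n) (norm_nonneg _) (by positivity))
    _ = C * ((n : ℝ) ^ 1 * σ ^ n + σ ^ n) := by ring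

theorem stmt0_general (p : ℕ) [Fact p.Prime]
    (M : Type*) [NormedAddCommGroup M] [NormedSpace ℚ_[p] M] [CompleteSpace M]
    (γ : M →L[ℚ_[p]] M)
    (m : ℕ)
    (hm : ∀ x : M, ‖x‖ ≤ 1 → ‖((γ - 1) ^ m) x‖ ≤ (p : ℝ)⁻¹) :
    ∀ x : M,
      Summable (fun n : ℕ =>
        (((-1 : ℚ_[p]) ^ n / ((n : ℚ_[p]) + 1)) • (((γ - 1) ^ (n + 1)) x))) ∧
      ∃ y : M, (γ - 1) y =
        ∑' n : ℕ, (((-1 : ℚ_[p]) ^ n / ((n : ℚ_[p]) + 1)) • (((γ - 1) ^ (n + 1)) x)) := by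
  have hp : (p : ℚ_[p]) ≠ 0 := Nat.cast_ne_zero.2 (Fact.out : p.Prime).ne_zero
  have hcontract : ‖(γ - 1) ^ (m * 2)‖ < 1 := by
    rw [pow_mul]
    refine (ContinuousLinearMap.opNorm_pow_succ_le_of_norm_apply_le hp Padic.norm_p_lt_one
      (by rwa [Padic.norm_p]) 1).trans_lt ?_
    rw [pow_one]
    exact Padic.norm_p_lt_one
  have hL := (summable_neg_one_pow_div_smul_pow (p := p) hcontract).hasSum
  intro x
  have hlog := (hL.mapL (ContinuousLinearMap.apply ℚ_[p] M x)).mapL (γ - 1)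
  simp only [ContinuousLinearMap.apply_apply, map_smul,
    ← mul_apply_eq_comp, ← pow_succ'] at hlog
  exact ⟨hlog.summable, _, hlog.tsum_eq.symm⟩

/-- Let `M` be a `ℚ_p`-Banach space with unit ball `M^o`, equipped with a
continuous isometric action of `ℤ_p` via the operator `γ` (the action of a topological
generator).  Suppose `(γ-1)^m (M^o) ⊆ p · M^o` for some `m`.  Then the operator
`log γ = ∑_{n ≥ 0} (-1)^n (γ-1)^{n+1} / (n+1)` converges on `M`, and its image satisfies
`log γ (M) ⊆ (γ - 1)(M)`. -/
theorem stmt0 (p : ℕ) [Fact p.Prime]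
    (M : Type*) [NormedAddCommGroup M] [NormedSpace ℚ_[p] M] [CompleteSpace M]
    (γ : M →L[ℚ_[p]] M) (hbij : Function.Bijective γ)
    (hiso : ∀ x : M, ‖γ x‖ = ‖x‖)
    (m : ℕ)
    (hm : ∀ x : M, ‖x‖ ≤ 1 → ‖((γ - 1) ^ m) x‖ ≤ (p : ℝ)⁻¹) :
    ∀ x : M,
      Summable (fun n : ℕ =>
        (((-1 : ℚ_[p]) ^ n / ((n : ℚ_[p]) + 1)) • (((γ - 1) ^ (n + 1)) x))) ∧
      ∃ y : M, (γ - 1) y =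
        ∑' n : ℕ, (((-1 : ℚ_[p]) ^ n / ((n : ℚ_[p]) + 1)) • (((γ - 1) ^ (n + 1)) x)) :=
  stmt0_general p M γ m hm
end

section
/- Let M be a Q_p-Banach space with a continuous Z_p-action such that for some integer m > 0, (γ-1)^m(M^o) ⊆ p·M^o for all γ ∈ Z_p, where M^o is the open unit ball. If moreover (γ-1)(M^o) ⊆ p^2·M^o for all γ ∈ Z_p, then the action of Z_p on M is analytic: for every f ∈ M, the function g : Z_p → M defined by g(x) = Σ_{n≥0} binomial(x,n)·(γ-1)^n·f (with γ = 1 ∈ Z_p acting) converges and satisfies g(x) = x·f, and g is given by a convergent power series in x. -/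
/-!
Put `A = ρ 1 - 1`. Rescaling vectors into the unit ball, the hypothesis on `ρ 1 - 1` gives
`‖Aⁿ f‖ ≤ C p⁻²ⁿ`. Hence the Mahler series `∑ binom(x, n) • Aⁿ f` converges absolutely and
uniformly in `x`; by the binomial theorem `ρ k = (1 + A)ᵏ` it equals `ρ x f` at `x = k ∈ ℕ`, hence
everywhere, as `ℕ` is dense in `ℤ_[p]` and both sides are continuous.

Expanding `n! • binom(x, n) = ∑ₖ cₙₖ xᵏ` with integral `cₙₖ` and using `‖1/n!‖ ≤ pⁿ`, the
`(n, k)` term of the double series is bounded by `C p⁻ⁿ` for `k ≤ n` and vanishes otherwise. This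
majorant is summable, so the series can be summed by columns instead, which gives the power
series `∑ₖ xᵏ • bₖ`, and `bₖ → 0` because the column sums of the majorant are summable.
-/

open Filter Finset Topology

section NormedField
variable {𝕜 E : Type*} [NormedField 𝕜] [SeminormedAddCommGroup E] [NormedSpace 𝕜 E]

theorem ContinuousLinearMap.norm_pow_apply_lt {A : E →L[𝕜] E} {c : 𝕜} (hc : c ≠ 0)
    (hA : ∀ x, ‖x‖ < 1 → ‖A x‖ < ‖c‖) (n : ℕ) {x : E} (hx : ‖x‖ < 1) :
    ‖(A ^ n) x‖ < ‖c‖ ^ n := by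
  induction n with
  | zero => simpa using hx
  | succ n ih =>
    have hcn : 0 < ‖c‖ ^ n := pow_pos (norm_pos_iff.mpr hc) n
    have hy : ‖(c ^ n)⁻¹ • (A ^ n) x‖ < 1 := by
      rw [norm_smul, norm_inv, norm_pow, inv_mul_lt_one₀ hcn]
      exact ih
    have := hA _ hy
    rw [map_smul, norm_smul, norm_inv, norm_pow, inv_mul_lt_iff₀ hcn, ← pow_succ] at this
    rw [pow_succ']
    exact this

end NormedField

section NontriviallyNormedField
variable {𝕜 E : Type*} [NontriviallyNormedField 𝕜] [SeminormedAddCommGroup E] [NormedSpace 𝕜 E]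

theorem ContinuousLinearMap.exists_norm_pow_apply_le {A : E →L[𝕜] E} {c : 𝕜} (hc : c ≠ 0)
    (hA : ∀ x, ‖x‖ < 1 → ‖A x‖ < ‖c‖) (f : E) : ∃ C, ∀ n, ‖(A ^ n) f‖ ≤ C * ‖c‖ ^ n := by
  obtain ⟨d, hd0, hd⟩ := NormedField.exists_norm_lt 𝕜 (inv_pos.mpr (by positivity : 0 < ‖f‖ + 1))
  have hdf : ‖d • f‖ < 1 := by
    rw [norm_smul]
    calc ‖d‖ * ‖f‖ ≤ ‖d‖ * (‖f‖ + 1) := by gcongr; linarith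
      _ < 1 := by rwa [← lt_inv_mul_iff₀' (by positivity), mul_one]
  refine ⟨‖d‖⁻¹, fun n => ?_⟩
  have := (A.norm_pow_apply_lt hc hA n hdf).le
  rwa [map_smul, norm_smul, ← le_inv_mul_iff₀ hd0] at this

end NontriviallyNormedField

theorem summable_ite_le_pow {r : ℝ} (hr0 : 0 ≤ r) (hr1 : r < 1) :
    Summable fun q : ℕ × ℕ => if q.2 ≤ q.1 then r ^ q.1 else 0 := by
  refine (summable_prod_of_nonneg fun q => by positivity).mpr ⟨fun n => ?_, ?_⟩
  · exact summable_of_ne_finset_zero (s := range (n + 1)) fun k hk => if_neg (by simpa using hk)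
  · have hrow : ∀ n : ℕ, ∑' k : ℕ, (if k ≤ n then r ^ n else 0) = (n + 1) * r ^ n := by
      intro n
      rw [tsum_eq_sum (s := range (n + 1)) fun k hk => if_neg (by simpa using hk),
        sum_ite_of_true fun k hk => by simpa [Nat.lt_succ_iff] using hk]
      simp
    simp only [hrow, add_mul, one_mul]
    refine .add ?_ (summable_geometric_of_lt_one hr0 hr1)
    simpa using summable_pow_mul_geometric_of_norm_lt_one 1 (by rwa [Real.norm_of_nonneg hr0])

theorem hasSum_of_hasSum_fiberwise_swap {β γ E : Type*} [NormedAddCommGroup E] [CompleteSpace E]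
    {F : β × γ → E} (hF : Summable fun q => ‖F q‖) {u : β → E} {v : γ → E} {s : E}
    (hrow : ∀ b, HasSum (fun c => F (b, c)) (u b)) (hcol : ∀ c, HasSum (fun b => F (b, c)) (v c))
    (hu : HasSum u s) : HasSum v s := by
  have hFs := hF.of_norm.hasSum
  obtain rfl := (hFs.prod_fiberwise hrow).unique hu
  exact ((Equiv.prodComm γ β).hasSum_iff.mpr hFs).prod_fiberwise hcol

theorem prod_range_sub_natCast_eq_sum {R : Type*} [CommRing R] (x : R) (n : ℕ) :
    ∏ i ∈ range n, (x - i) = ∑ k ∈ range (n + 1), ((descPochhammer ℤ n).coeff k : R) * x ^ k := by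
  rw [← descPochhammer_eval_eq_prod_range, ← descPochhammer_map (Int.castRingHom R),
    Polynomial.eval_eq_sum_range' ((Polynomial.natDegree_map_le).trans_lt
      (by rw [descPochhammer_natDegree]; exact n.lt_succ_self))]
  simp only [Polynomial.coeff_map, eq_intCast]

theorem hasSum_pow_smul_descPochhammer_coeff {K V : Type*} [Field K] [AddCommGroup V] [Module K V]
    [TopologicalSpace V] (x : K) (n : ℕ) (v : V) :
    HasSum (fun k => x ^ k • (((descPochhammer ℤ n).coeff k : K) / n.factorial) • v)
      (((∏ i ∈ range n, (x - i)) / n.factorial) • v) := by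
  have hvanish : ∀ k ∉ range (n + 1),
      x ^ k • (((descPochhammer ℤ n).coeff k : K) / n.factorial) • v = 0 := by
    intro k hk
    rw [Polynomial.coeff_eq_zero_of_natDegree_lt
      (by rw [descPochhammer_natDegree]; simpa using hk)]
    simp
  convert hasSum_sum_of_ne_finset_zero (L := .unconditional ℕ) hvanish using 1
  simp only [smul_smul, ← sum_smul, prod_range_sub_natCast_eq_sum, sum_div]
  congr 1
  exact sum_congr rfl fun k _ => by ring

theorem ContinuousLinearMap.hasSum_choose_smul_pow_apply {R E : Type*} [CommRing R]
    [AddCommGroup E] [Module R E] [TopologicalSpace E] [IsTopologicalAddGroup E]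
    [ContinuousConstSMul R E] (B : E →L[R] E) (k : ℕ) (v : E) :
    HasSum (fun n => ((k.choose n : ℕ) : R) • (B ^ n) v) (((B + 1) ^ k) v) := by
  have hvanish : ∀ n ∉ range (k + 1), ((k.choose n : ℕ) : R) • (B ^ n) v = 0 := fun n hn => by
    rw [Nat.choose_eq_zero_of_lt (by simpa using hn)]
    simp
  convert hasSum_sum_of_ne_finset_zero (L := .unconditional ℕ) hvanish using 1
  rw [(Commute.one_right B).add_pow, FunLike.coe_sum, Finset.sum_apply]
  refine sum_congr rfl fun n _ => ?_
  simp [Nat.cast_smul_eq_nsmul]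

theorem Padic.norm_inv_factorial_le {p : ℕ} [Fact p.Prime] (n : ℕ) :
    ‖((n.factorial : ℚ_[p]))⁻¹‖ ≤ (p : ℝ) ^ n := by
  have hp : (1 : ℝ) ≤ p := by exact_mod_cast (Fact.out : p.Prime).one_le
  rw [norm_inv, Padic.norm_eq_zpow_neg_valuation (by exact_mod_cast n.factorial_ne_zero),
    Padic.valuation_natCast, ← zpow_neg, neg_neg, ← zpow_natCast]
  exact zpow_le_zpow_right₀ hp (by exact_mod_cast padicValNat_factorial_le (p := p) n)

theorem PadicInt.coe_choose {p : ℕ} [Fact p.Prime] (x : ℤ_[p]) (n : ℕ) :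
    ((Ring.choose x n : ℤ_[p]) : ℚ_[p]) = (∏ i ∈ range n, ((x : ℚ_[p]) - i)) / n.factorial := by
  have h := Ring.descPochhammer_eq_factorial_smul_choose x n
  rw [Polynomial.descPochhammer_smeval_eq_ascPochhammer, Polynomial.ascPochhammer_smeval_eq_eval,
    ← descPochhammer_eval_eq_ascPochhammer, descPochhammer_eval_eq_prod_range, nsmul_eq_mul] at h
  rw [eq_div_iff (by exact_mod_cast n.factorial_ne_zero), mul_comm]
  have := congrArg (PadicInt.Coe.ringHom (p := p)) h.symm
  simp only [map_mul, map_prod, map_sub, map_natCast] at this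
  exact this

section PadicBanach
variable {p : ℕ} [Fact p.Prime] {M : Type*} [NormedAddCommGroup M] [NormedSpace ℚ_[p] M]

theorem norm_descPochhammer_coeff_div_factorial_smul_le {a : M} {C : ℝ} (n k : ℕ)
    (ha : ‖a‖ ≤ C * ((p : ℝ)⁻¹ ^ 2) ^ n) :
    ‖(((descPochhammer ℤ n).coeff k : ℚ_[p]) / n.factorial) • a‖ ≤
      if k ≤ n then C * (p : ℝ)⁻¹ ^ n else 0 := by
  split_ifs with hkn
  · have hp : (0 : ℝ) < p := by exact_mod_cast (Fact.out : p.Prime).pos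
    have hcoeff : ‖((descPochhammer ℤ n).coeff k : ℚ_[p])‖ ≤ 1 := Padic.norm_int_le_one _
    calc ‖(((descPochhammer ℤ n).coeff k : ℚ_[p]) / n.factorial) • a‖
        ≤ (1 * (p : ℝ) ^ n) * (C * ((p : ℝ)⁻¹ ^ 2) ^ n) := by
          rw [norm_smul, div_eq_mul_inv, norm_mul]
          exact mul_le_mul (mul_le_mul hcoeff (Padic.norm_inv_factorial_le n) (norm_nonneg _)
            zero_le_one) ha (norm_nonneg _) (by positivity)
      _ = C * (p : ℝ)⁻¹ ^ n := by
          have h : (p : ℝ) ^ n * (p : ℝ)⁻¹ ^ n = 1 := by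
            rw [← mul_pow, mul_inv_cancel₀ hp.ne', one_pow]
          linear_combination (C * (p : ℝ)⁻¹ ^ n) * h
  · rw [Polynomial.coeff_eq_zero_of_natDegree_lt (by rw [descPochhammer_natDegree]; omega)]
    simp

theorem exists_tendsto_zero_hasSum_pow_smul [CompleteSpace M] {a : ℕ → M} {C : ℝ}
    (ha : ∀ n, ‖a n‖ ≤ C * ((p : ℝ)⁻¹ ^ 2) ^ n) :
    ∃ b : ℕ → M, Tendsto b atTop (𝓝 0) ∧ ∀ (x : ℤ_[p]) {s : M},
      HasSum (fun n => ((∏ i ∈ range n, ((x : ℚ_[p]) - i)) / n.factorial) • a n) s →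
      HasSum (fun k => (x : ℚ_[p]) ^ k • b k) s := by
  have hr0 : (0 : ℝ) ≤ (p : ℝ)⁻¹ := by positivity
  have hr1 : (p : ℝ)⁻¹ < 1 := inv_lt_one_of_one_lt₀ (by exact_mod_cast (Fact.out : p.Prime).one_lt)
  set D : ℕ → ℕ → M := fun n k => (((descPochhammer ℤ n).coeff k : ℚ_[p]) / n.factorial) • a n
  set G : ℕ × ℕ → ℝ := fun q => if q.2 ≤ q.1 then C * (p : ℝ)⁻¹ ^ q.1 else 0
  have hDG : ∀ n k, ‖D n k‖ ≤ G (n, k) :=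
    fun n k => norm_descPochhammer_coeff_div_factorial_smul_le n k (ha n)
  have hG : Summable G := by
    simpa only [mul_ite, mul_zero] using (summable_ite_le_pow hr0 hr1).mul_left C
  have hGcols := (summable_prod_of_nonneg fun q => (norm_nonneg _).trans (hDG q.2 q.1)).mp
    hG.prod_symm
  have hD : ∀ k, HasSum (fun n => D n k) (∑' n, D n k) :=
    fun k => (Summable.of_norm_bounded (hGcols.1 k) fun n => hDG n k).hasSum
  refine ⟨fun k => ∑' n, D n k, ?_, fun x s hs => ?_⟩
  · refine squeeze_zero_norm (fun k => tsum_of_norm_bounded (hGcols.1 k).hasSum fun n => hDG n k)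
      hGcols.2.tendsto_atTop_zero
  · have hx : ∀ k, ‖(x : ℚ_[p]) ^ k‖ ≤ 1 := fun k => by
      simpa [norm_pow] using pow_le_one₀ (norm_nonneg x) x.norm_le_one
    refine hasSum_of_hasSum_fiberwise_swap (F := fun q => (x : ℚ_[p]) ^ q.2 • D q.1 q.2) ?_
      (fun n => hasSum_pow_smul_descPochhammer_coeff _ n (a n)) (fun k => (hD k).const_smul _) hs
    refine hG.of_nonneg_of_le (fun _ => norm_nonneg _) fun q => ?_
    rw [norm_smul]
    exact (mul_le_of_le_one_left (norm_nonneg _) (hx q.2)).trans (hDG q.1 q.2)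

variable {ρ : ℤ_[p] → M →L[ℚ_[p]] M}

theorem apply_natCast_eq_pow (hρ0 : ρ 0 = 1) (hρadd : ∀ a b, ρ (a + b) = ρ a * ρ b) (k : ℕ) :
    ρ k = ρ 1 ^ k := by
  induction k with
  | zero => simpa using hρ0
  | succ k ih => rw [Nat.cast_succ, hρadd, ih, pow_succ]

theorem hasSum_choose_smul_sub_one_pow_apply [CompleteSpace M] (hρ0 : ρ 0 = 1)
    (hρadd : ∀ a b, ρ (a + b) = ρ a * ρ b) {f : M} (hf : Continuous fun x => ρ x f)
    (hsum : Summable fun n : ℕ => ‖((ρ 1 - 1) ^ n) f‖) (x : ℤ_[p]) :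
    HasSum (fun n => ((Ring.choose x n : ℤ_[p]) : ℚ_[p]) • ((ρ 1 - 1) ^ n) f) (ρ x f) := by
  set term : ℕ → ℤ_[p] → M :=
    fun (n : ℕ) (y : ℤ_[p]) => ((Ring.choose y n : ℤ_[p]) : ℚ_[p]) • ((ρ 1 - 1) ^ n) f
  have hterm : ∀ (n : ℕ) (y : ℤ_[p]), ‖term n y‖ ≤ ‖((ρ 1 - 1) ^ n) f‖ := fun n y => by
    rw [norm_smul, ← PadicInt.norm_def]
    exact mul_le_of_le_one_left (norm_nonneg _) (PadicInt.norm_le_one _)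
  have hcont : Continuous fun y => ∑' n, term n y :=
    continuous_tsum (fun n => (continuous_subtype_val.comp (PadicInt.continuous_choose n)).smul
      continuous_const) hsum hterm
  have hnat : ∀ k : ℕ, ∑' n, term n k = ρ k f := fun k => by
    have := (ρ 1 - 1).hasSum_choose_smul_pow_apply k f
    rw [sub_add_cancel, ← apply_natCast_eq_pow hρ0 hρadd] at this
    simpa only [term, Ring.choose_natCast, PadicInt.coe_natCast] using this.tsum_eq
  have heq := PadicInt.denseRange_natCast.equalizer hcont hf (funext hnat)
  rw [← congrFun heq x]
  exact (Summable.of_norm_bounded hsum fun n => hterm n x).hasSum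

end PadicBanach

theorem stmt1_general (p : ℕ) [Fact p.Prime]
    (M : Type*) [NormedAddCommGroup M] [NormedSpace ℚ_[p] M] [CompleteSpace M]
    (ρ : ℤ_[p] → M →L[ℚ_[p]] M)
    (hρ0 : ρ 0 = 1)
    (hρadd : ∀ a b : ℤ_[p], ρ (a + b) = ρ a * ρ b)
    (hcont : Continuous fun q : ℤ_[p] × M => ρ q.1 q.2)
    (hsq : ∀ (γ : ℤ_[p]) (x : M), ‖x‖ < 1 → ‖(ρ γ - 1) x‖ < ((p : ℝ)⁻¹) ^ 2) :
    ∀ f : M,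
      (∀ x : ℤ_[p],
        HasSum (fun n : ℕ =>
          ((∏ i ∈ Finset.range n, ((x : ℚ_[p]) - (i : ℚ_[p]))) / (n.factorial : ℚ_[p])) •
            (((ρ 1 - 1) ^ n) f)) (ρ x f)) ∧
      ∃ b : ℕ → M, Tendsto b atTop (nhds 0) ∧
        ∀ x : ℤ_[p], HasSum (fun k : ℕ => ((x : ℚ_[p]) ^ k) • b k) (ρ x f) := by
  intro f
  have hp : (p : ℚ_[p]) ^ 2 ≠ 0 := pow_ne_zero 2 (by exact_mod_cast (Fact.out : p.Prime).ne_zero)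
  obtain ⟨C, hC⟩ := (ρ 1 - 1).exists_norm_pow_apply_le hp
    (by simpa only [norm_pow, Padic.norm_p] using hsq 1) f
  simp only [norm_pow, Padic.norm_p] at hC
  have hsum : Summable fun n : ℕ => ‖((ρ 1 - 1) ^ n) f‖ := by
    refine .of_nonneg_of_le (fun _ => norm_nonneg _) hC
      ((summable_geometric_of_lt_one (by positivity) ?_).mul_left C)
    exact pow_lt_one₀ (by positivity)
      (inv_lt_one_of_one_lt₀ (by exact_mod_cast (Fact.out : p.Prime).one_lt)) two_ne_zero
  have hmahler : ∀ x : ℤ_[p], HasSum (fun n : ℕ =>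
      ((∏ i ∈ range n, ((x : ℚ_[p]) - i)) / n.factorial) • ((ρ 1 - 1) ^ n) f) (ρ x f) :=
    fun x => by
      simpa only [PadicInt.coe_choose] using hasSum_choose_smul_sub_one_pow_apply hρ0 hρadd
        (hcont.comp (continuous_id.prodMk continuous_const)) hsum x
  obtain ⟨b, hb, hbsum⟩ := exists_tendsto_zero_hasSum_pow_smul hC
  exact ⟨hmahler, b, hb, fun x => hbsum x (hmahler x)⟩

/-- Let `M` be a `ℚ_p`-Banach space with a continuous `ℤ_p`-action `ρ` such
that for some `m > 0`, `(γ - 1)^m (M^o) ⊆ p · M^o` for all `γ ∈ ℤ_p`, where `M^o` is the open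
unit ball.  If moreover `(γ - 1)(M^o) ⊆ p² · M^o` for all `γ`, then the action of `ℤ_p` on `M`
is analytic: for every `f ∈ M` the function `g(x) = ∑ₙ binom(x,n) • (γ-1)^n f` (with
`γ = ρ 1`) converges and satisfies `g x = ρ x f`, and `g` is given by a convergent power
series in `x` with coefficients tending to `0`. -/
theorem stmt1 (p : ℕ) [Fact p.Prime]
    (M : Type*) [NormedAddCommGroup M] [NormedSpace ℚ_[p] M] [CompleteSpace M]
    (ρ : ℤ_[p] → M →L[ℚ_[p]] M)
    (hρ0 : ρ 0 = 1)
    (hρadd : ∀ a b : ℤ_[p], ρ (a + b) = ρ a * ρ b)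
    (hcont : Continuous fun q : ℤ_[p] × M => ρ q.1 q.2)
    (m : ℕ) (hm : 0 < m)
    (hpow : ∀ (γ : ℤ_[p]) (x : M), ‖x‖ < 1 → ‖((ρ γ - 1) ^ m) x‖ < (p : ℝ)⁻¹)
    (hsq : ∀ (γ : ℤ_[p]) (x : M), ‖x‖ < 1 → ‖(ρ γ - 1) x‖ < ((p : ℝ)⁻¹) ^ 2) :
    ∀ f : M,
      (∀ x : ℤ_[p],
        HasSum (fun n : ℕ =>
          ((∏ i ∈ Finset.range n, ((x : ℚ_[p]) - (i : ℚ_[p]))) / (n.factorial : ℚ_[p])) •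
            (((ρ 1 - 1) ^ n) f)) (ρ x f)) ∧
      ∃ b : ℕ → M, Tendsto b atTop (nhds 0) ∧
        ∀ x : ℤ_[p], HasSum (fun k : ℕ => ((x : ℚ_[p]) ^ k) • b k) (ρ x f) :=
  stmt1_general p M ρ hρ0 hρadd hcont hsq
end

section
/- Let M^• be a bounded-above cochain complex of p-adically complete, p-torsion-free Z_p-modules. Then for each i, the cohomology group H^i(M^•) satisfies Hom_{Z_p}(Q_p, H^i(M^•)) = 0. -/
/-!
Let `f : A → B` and `K ≤ B`, with `A` `I`-adically precomplete, `B` `I`-adically Hausdorff and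
`a ∈ I`. If classes `g n ∈ K / (K ∩ im f)` satisfy `a • g (n + 1) = g n`, lift them to `z n ∈ K` and write
`a • z (n + 1) - z n = f (y n)`. The series `L = ∑ aᵏ • y k` converges in `A`, and the telescoping
identity `z 0 + f (∑_{k<n} aᵏ • y k) = aⁿ • z n` shows that `z 0 + f L` lies in every `Iⁿ • B`,
hence vanishes. So `g 0 = 0`; applied to `g n = φ (q / pⁿ)` this kills every
`φ : ℚ_p → Hⁱ(M^•)`.
-/

open Finset

section AdicChain

variable {R A B : Type*} [CommRing R] [AddCommGroup A] [Module R A] [AddCommGroup B] [Module R B]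
  {I : Ideal R} [IsPrecomplete I A] [IsHausdorff I B] {a : R}

theorem mem_range_of_smul_succ_sub_mem_range (ha : a ∈ I) (f : A →ₗ[R] B) {z : ℕ → B}
    (hz : ∀ n, a • z (n + 1) - z n ∈ LinearMap.range f) : z 0 ∈ LinearMap.range f := by
  choose y hy using hz
  set w : ℕ → A := fun n => ∑ k ∈ range n, a ^ k • y k with hw
  have hcauchy : ∀ {m n}, m ≤ n → w m ≡ w n [SMOD (I ^ m • ⊤ : Submodule R A)] := by
    intro m n hmn
    refine (SModEq.sub_mem.mpr ?_).symm
    rw [hw, ← sum_Ico_eq_sub _ hmn]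
    refine Submodule.sum_mem _ fun k hk => Submodule.smul_mem_smul ?_ trivial
    exact Ideal.pow_le_pow_right (mem_Ico.mp hk).1 (Ideal.pow_mem_pow ha k)
  obtain ⟨L, hL⟩ := IsPrecomplete.prec' w hcauchy
  have htelescope : ∀ n, z 0 + f (w n) = a ^ n • z n := by
    intro n
    induction n with
    | zero => simp [hw]
    | succ n ih =>
      rw [show w (n + 1) = w n + a ^ n • y n from sum_range_succ _ _, map_add, ← add_assoc, ih, map_smul, hy, smul_sub,
        smul_smul, ← pow_succ]
      abel
  have hdiv : ∀ n, z 0 + f L ≡ 0 [SMOD (I ^ n • ⊤ : Submodule R B)] := by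
    intro n
    have hsplit : z 0 + f L - 0 = a ^ n • z n - f (w n - L) := by
      rw [map_sub, ← htelescope n]
      abel
    rw [SModEq.sub_mem, hsplit]
    exact Submodule.sub_mem _ (Submodule.smul_mem_smul (Ideal.pow_mem_pow ha n) trivial)
      (Submodule.smul_top_le_comap_smul_top _ f (SModEq.sub_mem.mp (hL n)))
  refine ⟨-L, ?_⟩
  rw [map_neg, neg_eq_iff_add_eq_zero, add_comm]
  exact IsHausdorff.haus' _ hdiv

theorem subquotient_eq_zero_of_smul_succ_eq (ha : a ∈ I) (f : A →ₗ[R] B) {K : Submodule R B}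
    {g : ℕ → K ⧸ Submodule.comap K.subtype (LinearMap.range f)} (hg : ∀ n, a • g (n + 1) = g n) :
    g 0 = 0 := by
  choose z hz using fun n => Submodule.Quotient.mk_surjective _ (g n)
  have hrel : ∀ n, a • (z (n + 1) : B) - z n ∈ LinearMap.range f := by
    intro n
    have : a • z (n + 1) - z n ∈ Submodule.comap K.subtype (LinearMap.range f) := by
      rw [← Submodule.Quotient.mk_eq_zero, Submodule.Quotient.mk_sub, Submodule.Quotient.mk_smul,
        hz, hz, hg, sub_self]
    exact this
  rw [← hz, Submodule.Quotient.mk_eq_zero]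
  exact mem_range_of_smul_succ_sub_mem_range (z := fun n => (z n : B)) ha f hrel

end AdicChain

theorem Padic.linearMap_eq_zero_of_forall_smul_succ_eq {p : ℕ} [Fact p.Prime] {Q : Type*}
    [AddCommGroup Q] [Module ℤ_[p] Q] (φ : ℚ_[p] →ₗ[ℤ_[p]] Q)
    (h : ∀ x : ℕ → Q, (∀ n, (p : ℤ_[p]) • x (n + 1) = x n) → x 0 = 0) : φ = 0 := by
  have hp : (p : ℚ_[p]) ≠ 0 := Nat.cast_ne_zero.mpr (Fact.out : p.Prime).ne_zero
  ext q
  simpa using h (fun n => φ (q / (p : ℚ_[p]) ^ n)) fun n => by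
    rw [← map_smul]
    congr 1
    change ((p : ℤ_[p]) : ℚ_[p]) * _ = _
    rw [PadicInt.coe_natCast]
    field_simp
    ring

theorem stmt2_general (p : ℕ) [Fact p.Prime]
    (M : ℤ → Type*) [∀ j, AddCommGroup (M j)] [∀ j, Module ℤ_[p] (M j)]
    (d : ∀ j : ℤ, M j →ₗ[ℤ_[p]] M (j + 1))
    (hcompl : ∀ j : ℤ, IsAdicComplete (Ideal.span {(p : ℤ_[p])}) (M j))
    (i : ℤ)
    (φ : ℚ_[p] →ₗ[ℤ_[p]]
      (LinearMap.ker (d (i + 1)) ⧸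
        Submodule.comap (LinearMap.ker (d (i + 1))).subtype (LinearMap.range (d i)))) :
    φ = 0 := by
  have := hcompl i
  have := hcompl (i + 1)
  exact Padic.linearMap_eq_zero_of_forall_smul_succ_eq φ fun _ hx =>
    subquotient_eq_zero_of_smul_succ_eq (Ideal.mem_span_singleton_self _) (d i) hx

/-- Let `M^•` be a bounded-above cochain complex of `p`-adically complete,
`p`-torsion-free `ℤ_p`-modules.  Then for each `i`, the cohomology group
`H^i(M^•) = ker(d : M^i → M^{i+1}) / im(d : M^{i-1} → M^i)` satisfies
`Hom_{ℤ_p}(ℚ_p, H^i(M^•)) = 0`.  (Here the cohomology at spot `i+1` is realized as the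
quotient of `ker (d (i+1))` by the preimage of `range (d i)`, which covers every spot as `i`
ranges over `ℤ`.) -/
theorem stmt2 (p : ℕ) [Fact p.Prime]
    (M : ℤ → Type*) [∀ j, AddCommGroup (M j)] [∀ j, Module ℤ_[p] (M j)]
    (d : ∀ j : ℤ, M j →ₗ[ℤ_[p]] M (j + 1))
    (hdd : ∀ j : ℤ, (d (j + 1)).comp (d j) = 0)
    (N : ℤ) (hbdd : ∀ j : ℤ, N < j → Subsingleton (M j))
    (hcompl : ∀ j : ℤ, IsAdicComplete (Ideal.span {(p : ℤ_[p])}) (M j))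
    (htf : ∀ (j : ℤ) (x : M j), (p : ℤ_[p]) • x = 0 → x = 0)
    (i : ℤ)
    (φ : ℚ_[p] →ₗ[ℤ_[p]]
      (LinearMap.ker (d (i + 1)) ⧸
        Submodule.comap (LinearMap.ker (d (i + 1))).subtype (LinearMap.range (d i)))) :
    φ = 0 :=
  stmt2_general p M d hcompl i φ
end

section
/- With R = C⟨T^{±1/p^∞}⟩ and Γ ≅ Z_p acting by γ_a·T^{1/p^m} = ζ_{p^m}^a T^{1/p^m} for a ∈ Z_p (where (ζ_{p^m}) is a fixed compatible system of p-power roots of unity), let tr_m : R → R_m = C⟨T^{±1/p^m}⟩ be Tate's normalized trace. Then for any topological generator γ of p^m Γ, the operator γ - 1 is invertible on ker(tr_m), and the operator norm of its inverse equals |ζ_{p^{m+1}} - 1|^{-1} = p^{1/(p^m(p-1))}. -/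
/-! On `ker(tr_m)` the operator `γ - 1` is diagonal in the monomials: it multiplies the
coefficient of `T^{l/p^k}` (`k > m`, `p ∤ l`) by `ζ_{p^k}^{lu} - 1`. As `lu` is a `p`-adic unit,
this factor has norm `p^{-1/(p^{k-1}(p-1))}`, which lies between `|ζ_{p^{m+1}} - 1|` and `1`.
Hence `γ - 1` and its coefficientwise inverse both preserve `ker(tr_m)`, the inverse has norm at
most `|ζ_{p^{m+1}} - 1|⁻¹`, and the monomial `T^{1/p^{m+1}}` attains this bound. -/

open Filter

/-- The action of `γ - 1`, where `γ` is the topological generator of `p^m Γ` corresponding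
to `u · p^m ∈ p^m ℤ_p`, on the coefficient of the monomial `T^q`:  on `T^{l/p^k}` (with
`gcd(l,p)=1`), `γ` acts by multiplication by `ζ_{p^k}^{l·u}` where `(ζ_{p^k})_k` is the
fixed compatible system of `p`-power roots of unity. -/
noncomputable def gammaEig (p : ℕ) [Fact p.Prime] {K : Type*} [NontriviallyNormedField K]
    (ζ : ℕ → K) (u : ℤ_[p]) (q : ℚ) : K :=
  ζ (padicValNat p q.den) ^
    ((PadicInt.toZModPow (padicValNat p q.den)) ((q.num : ℤ_[p]) * u)).val

/-- An element of `ker(tr_m) ⊆ R = C⟨T^{±1/p^∞}⟩`, viewed as a function on the exponents: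
supported on exponents `l/p^k` in lowest terms with `k > m`, bounded, and with coefficients
tending to `0`. -/
def memKerTrace (p m : ℕ) {K : Type*} [NontriviallyNormedField K] (f : ℚ → K) : Prop :=
  (∀ q : ℚ, f q ≠ 0 → ∃ k : ℕ, m < k ∧ q.den = p ^ k) ∧
  (∃ C : ℝ, ∀ q : ℚ, ‖f q‖ ≤ C) ∧
  Tendsto f cofinite (nhds 0)

namespace memKerTrace

variable {p m : ℕ} {K : Type*} [NontriviallyNormedField K] {f g : ℚ → K}

lemma of_norm_le (hf : memKerTrace p m f) {M : ℝ} (hM : 0 ≤ M)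
    (h : ∀ q, ‖g q‖ ≤ M * ‖f q‖) : memKerTrace p m g := by
  obtain ⟨hsupp, ⟨C, hC⟩, hlim⟩ := hf
  refine ⟨fun q hq => hsupp q fun hfq => hq ?_, ⟨M * C, fun q => (h q).trans ?_⟩, ?_⟩
  · simpa [hfq] using h q
  · gcongr
    exact hC q
  · refine squeeze_zero_norm h ?_
    simpa using (tendsto_zero_iff_norm_tendsto_zero.mp hlim).const_mul M

lemma mul (hf : memKerTrace p m f) {a : ℚ → K} {M : ℝ} (hM : 0 ≤ M)
    (ha : ∀ q k, m < k → q.den = p ^ k → ‖a q‖ ≤ M) :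
    memKerTrace p m fun q => a q * f q := by
  refine hf.of_norm_le hM fun q => ?_
  by_cases hfq : f q = 0
  · simp [hfq]
  obtain ⟨k, hk, hq⟩ := hf.1 q hfq
  rw [norm_mul]
  exact mul_le_mul_of_nonneg_right (ha q k hk hq) (norm_nonneg _)

lemma bddAbove_norm (hf : memKerTrace p m f) : BddAbove (Set.range fun q => ‖f q‖) := by
  obtain ⟨C, hC⟩ := hf.2.1
  exact ⟨C, Set.forall_mem_range.mpr hC⟩

lemma single {q₀ : ℚ} {k : ℕ} (hk : m < k) (hq₀ : q₀.den = p ^ k) (c : K) :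
    memKerTrace p m (Pi.single q₀ c) := by
  refine ⟨fun q hq => ⟨k, hk, ?_⟩, ⟨‖c‖, fun q => ?_⟩, ?_⟩
  · obtain rfl : q = q₀ := Pi.support_single_subset hq
    exact hq₀
  · rcases eq_or_ne q q₀ with rfl | hq <;> simp [*]
  · refine tendsto_const_nhds.congr' ?_
    filter_upwards [eventually_cofinite_ne q₀] with q hq
    simp [hq]

end memKerTrace

lemma ciSup_norm_single {ι E : Type*} [DecidableEq ι] [SeminormedAddCommGroup E] (i : ι) (c : E) :
    (⨆ j, ‖(Pi.single i c : ι → E) j‖) = ‖c‖ := by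
  have hle : ∀ j, ‖(Pi.single i c : ι → E) j‖ ≤ ‖c‖ := fun j => by
    rcases eq_or_ne j i with rfl | hj <;> simp [*]
  have : Nonempty ι := ⟨i⟩
  exact le_antisymm (ciSup_le hle)
    (le_ciSup_of_le ⟨‖c‖, Set.forall_mem_range.mpr hle⟩ i (by simp))

section Multiplier

variable {p m : ℕ} {K : Type*} [NontriviallyNormedField K] {a f g : ℚ → K} {E : ℝ}

lemma norm_le_inv_mul_norm_mul (hE : 0 < E) (ha : ∀ q k, m < k → q.den = p ^ k → E ≤ ‖a q‖)
    (hf : memKerTrace p m f) (q : ℚ) : ‖f q‖ ≤ E⁻¹ * ‖a q * f q‖ := by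
  by_cases hfq : f q = 0
  · simp [hfq]
  obtain ⟨k, hk, hq⟩ := hf.1 q hfq
  rw [norm_mul, le_inv_mul_iff₀ hE]
  exact mul_le_mul_of_nonneg_right (ha q k hk hq) (norm_nonneg _)

lemma existsUnique_memKerTrace_mul_eq (hE : 0 < E)
    (ha : ∀ q k, m < k → q.den = p ^ k → E ≤ ‖a q‖) (hg : memKerTrace p m g) :
    ∃! f, memKerTrace p m f ∧ (fun q => a q * f q) = g := by
  have ha₀ : ∀ q k, m < k → q.den = p ^ k → a q ≠ 0 := fun q k hk hq =>
    norm_pos_iff.mp (hE.trans_le (ha q k hk hq))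
  refine ⟨fun q => (a q)⁻¹ * g q, ⟨hg.mul (inv_nonneg.mpr hE.le) fun q k hk hq => ?_, ?_⟩, ?_⟩
  · rw [norm_inv]
    exact inv_anti₀ hE (ha q k hk hq)
  · funext q
    by_cases hgq : g q = 0
    · simp [hgq]
    obtain ⟨k, hk, hq⟩ := hg.1 q hgq
    exact mul_inv_cancel_left₀ (ha₀ q k hk hq) _
  · rintro f ⟨hf, rfl⟩
    funext q
    by_cases hfq : f q = 0
    · simp [hfq]
    obtain ⟨k, hk, hq⟩ := hf.1 q hfq
    exact (inv_mul_cancel_left₀ (ha₀ q k hk hq) _).symm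

lemma iSup_norm_le_inv_mul (hE : 0 < E) (ha : ∀ q k, m < k → q.den = p ^ k → E ≤ ‖a q‖)
    (hg : memKerTrace p m g) (hf : memKerTrace p m f) (h : (fun q => a q * f q) = g) :
    (⨆ q, ‖f q‖) ≤ E⁻¹ * ⨆ q, ‖g q‖ := by
  refine ciSup_le fun q => (norm_le_inv_mul_norm_mul hE ha hf q).trans ?_
  rw [congrFun h q]
  gcongr
  exact le_ciSup hg.bddAbove_norm q

lemma inv_norm_le_of_forall_iSup_norm_le {q₀ : ℚ} {k : ℕ} (hk : m < k) (hq₀ : q₀.den = p ^ k)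
    (ha₀ : a q₀ ≠ 0) {C : ℝ}
    (hC : ∀ g f, memKerTrace p m g → memKerTrace p m f → (fun q => a q * f q) = g →
      (⨆ q, ‖f q‖) ≤ C * ⨆ q, ‖g q‖) :
    ‖a q₀‖⁻¹ ≤ C := by
  classical
  have h := hC _ _ (memKerTrace.single hk hq₀ (a q₀ * 1)) (memKerTrace.single hk hq₀ 1)
    (funext fun q => (Pi.single_mul_right_apply q₀ q a 1).symm)
  rw [ciSup_norm_single, ciSup_norm_single, mul_one, norm_one] at h
  exact (inv_le_iff_one_le_mul₀ (norm_pos_iff.mpr ha₀)).mpr h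

end Multiplier

lemma rpow_neg_one_div_pow_mul_sub_one_le {x : ℝ} (hx : 1 < x) {i j : ℕ} (hij : i ≤ j) :
    x ^ (-(1 / (x ^ i * (x - 1)))) ≤ x ^ (-(1 / (x ^ j * (x - 1)))) := by
  have hx₀ : 0 < x - 1 := sub_pos.mpr hx
  gcongr <;> exact hx.le

section gammaEig

variable {p : ℕ} [hp : Fact p.Prime] {K : Type*} [NontriviallyNormedField K] {ζ : ℕ → K}
  {u : ℤ_[p]} {q : ℚ} {k : ℕ}

lemma gammaEig_eq_zpow (hu : ‖u‖ = 1) (hk : 1 ≤ k) (hq : q.den = p ^ k) :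
    ∃ j : ℤ, ¬ (p : ℤ) ∣ j ∧ gammaEig p ζ u q = ζ k ^ j := by
  have hnum : IsCoprime q.num (p : ℤ) := by
    rw [Int.isCoprime_iff_gcd_eq_one]
    exact (hq ▸ q.reduced).coprime_dvd_right (dvd_pow_self p (by omega))
  have hunit : IsUnit (PadicInt.toZModPow k ((q.num : ℤ_[p]) * u)) :=
    (PadicInt.isUnit_iff.mpr (by
      rw [norm_mul, PadicInt.norm_intCast_eq_one_iff.mpr hnum, hu, one_mul])).map _
  refine ⟨_, ?_, by rw [gammaEig, hq, padicValNat.prime_pow, zpow_natCast]⟩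
  rw [Int.natCast_dvd_natCast, ← hp.out.coprime_iff_not_dvd]
  have := ZMod.val_coe_unit_coprime hunit.unit
  rw [hunit.unit_spec] at this
  exact ((Nat.coprime_pow_right_iff (by omega) _ _).mp this).symm

variable (hζnorm : ∀ (k : ℕ) (j : ℤ), 1 ≤ k → ¬ ((p : ℤ) ∣ j) →
      ‖ζ k ^ j - 1‖ = (p : ℝ) ^ (-((1 : ℝ) / ((p : ℝ) ^ (k - 1) * ((p : ℝ) - 1)))))
include hζnorm

lemma norm_gammaEig_sub_one (hu : ‖u‖ = 1) (hk : 1 ≤ k) (hq : q.den = p ^ k) :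
    ‖gammaEig p ζ u q - 1‖ = (p : ℝ) ^ (-((1 : ℝ) / ((p : ℝ) ^ (k - 1) * ((p : ℝ) - 1)))) := by
  obtain ⟨j, hj, h⟩ := gammaEig_eq_zpow (ζ := ζ) hu hk hq
  rw [h, hζnorm k j hk hj]

lemma norm_gammaEig_sub_one_le_one (hu : ‖u‖ = 1) (hk : 1 ≤ k) (hq : q.den = p ^ k) :
    ‖gammaEig p ζ u q - 1‖ ≤ 1 := by
  have hp₁ : (1 : ℝ) < p := by exact_mod_cast hp.out.one_lt
  have : (0 : ℝ) < p - 1 := sub_pos.mpr hp₁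
  rw [norm_gammaEig_sub_one hζnorm hu hk hq]
  exact Real.rpow_le_one_of_one_le_of_nonpos hp₁.le (neg_nonpos.mpr (by positivity))

lemma le_norm_gammaEig_sub_one {m : ℕ} (hu : ‖u‖ = 1) (hmk : m < k) (hq : q.den = p ^ k) :
    (p : ℝ) ^ (-((1 : ℝ) / ((p : ℝ) ^ m * ((p : ℝ) - 1)))) ≤ ‖gammaEig p ζ u q - 1‖ := by
  rw [norm_gammaEig_sub_one hζnorm hu (by omega) hq]
  exact rpow_neg_one_div_pow_mul_sub_one_le (by exact_mod_cast hp.out.one_lt) (by omega)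

end gammaEig

theorem stmt7_general (p : ℕ) [Fact p.Prime]
    (K : Type*) [NontriviallyNormedField K]
    (ζ : ℕ → K)
    (hζnorm : ∀ (k : ℕ) (j : ℤ), 1 ≤ k → ¬ ((p : ℤ) ∣ j) →
      ‖ζ k ^ j - 1‖ = (p : ℝ) ^ (-((1 : ℝ) / ((p : ℝ) ^ (k - 1) * ((p : ℝ) - 1)))))
    (m : ℕ) (u : ℤ_[p]) (hu : ‖u‖ = 1) :
    -- `γ - 1` preserves `ker(tr_m)` …
    (∀ f : ℚ → K, memKerTrace p m f →
      memKerTrace p m (fun q => gammaEig p ζ u q * f q - f q)) ∧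
    -- … and is bijective on it,
    (∀ g : ℚ → K, memKerTrace p m g →
      ∃! f : ℚ → K, memKerTrace p m f ∧ (fun q => gammaEig p ζ u q * f q - f q) = g) ∧
    -- the inverse has operator norm at most `p^{1/(p^m(p-1))}` …
    (∀ g f : ℚ → K, memKerTrace p m g → memKerTrace p m f →
      (fun q => gammaEig p ζ u q * f q - f q) = g →
      (⨆ q : ℚ, ‖f q‖) ≤ (p : ℝ) ^ ((1 : ℝ) / ((p : ℝ) ^ m * ((p : ℝ) - 1))) * ⨆ q : ℚ, ‖g q‖) ∧
    -- … and this constant is optimal: the operator norm equals `p^{1/(p^m(p-1))}` …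
    (∀ C' : ℝ, 0 ≤ C' →
      (∀ g f : ℚ → K, memKerTrace p m g → memKerTrace p m f →
        (fun q => gammaEig p ζ u q * f q - f q) = g →
        (⨆ q : ℚ, ‖f q‖) ≤ C' * ⨆ q : ℚ, ‖g q‖) →
      (p : ℝ) ^ ((1 : ℝ) / ((p : ℝ) ^ m * ((p : ℝ) - 1))) ≤ C') ∧
    -- … which is `|ζ_{p^{m+1}} - 1|⁻¹`.
    (p : ℝ) ^ ((1 : ℝ) / ((p : ℝ) ^ m * ((p : ℝ) - 1))) = ‖ζ (m + 1) - 1‖⁻¹ := by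
  set E : ℝ := (p : ℝ) ^ (-((1 : ℝ) / ((p : ℝ) ^ m * ((p : ℝ) - 1)))) with hE_def
  have hE : 0 < E := Real.rpow_pos_of_pos (by exact_mod_cast (Fact.out : p.Prime).pos) _
  have hEinv : (p : ℝ) ^ ((1 : ℝ) / ((p : ℝ) ^ m * ((p : ℝ) - 1))) = E⁻¹ := by
    rw [hE_def, Real.rpow_neg (by positivity), inv_inv]
  have hlower : ∀ q k, m < k → q.den = p ^ k → E ≤ ‖gammaEig p ζ u q - 1‖ :=
    fun _ _ => le_norm_gammaEig_sub_one hζnorm hu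
  have hγ : ∀ f : ℚ → K, (fun q => gammaEig p ζ u q * f q - f q) =
      fun q => (gammaEig p ζ u q - 1) * f q := fun f => funext fun q => by ring
  simp only [hγ, hEinv]
  refine ⟨fun f hf => hf.mul zero_le_one fun q k hk hq =>
      norm_gammaEig_sub_one_le_one hζnorm hu (by omega) hq,
    fun g hg => existsUnique_memKerTrace_mul_eq hE hlower hg,
    fun g f hg hf h => iSup_norm_le_inv_mul hE hlower hg hf h, fun C _ hC => ?_, ?_⟩
  · -- the bound is attained at the monomial `T^{1/p^{m+1}}`
    have hq₀ : ((p ^ (m + 1) : ℕ) : ℚ)⁻¹.den = p ^ (m + 1) :=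
      Rat.inv_natCast_den_of_pos (pow_pos (Fact.out : p.Prime).pos _)
    have hnorm : ‖gammaEig p ζ u ((p ^ (m + 1) : ℕ) : ℚ)⁻¹ - 1‖ = E := by
      rw [norm_gammaEig_sub_one hζnorm hu (by omega) hq₀, Nat.add_sub_cancel]
    have := inv_norm_le_of_forall_iSup_norm_le (lt_add_one m) hq₀
      (norm_pos_iff.mp (hnorm ▸ hE)) hC
    rwa [hnorm] at this
  · have hp_not_dvd : ¬ (p : ℤ) ∣ 1 := by
      exact_mod_cast (Fact.out : p.Prime).not_dvd_one
    have h := hζnorm (m + 1) 1 (by omega) hp_not_dvd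
    rw [zpow_one, Nat.add_sub_cancel] at h
    rw [h]

/-- With `R = C⟨T^{±1/p^∞}⟩` and `Γ ≅ ℤ_p` acting through the compatible
system `(ζ_{p^k})` of `p`-power roots of unity, let `tr_m : R → R_m` be Tate's normalized
trace.  Then for any topological generator `γ` of `p^m Γ` (corresponding to `u·p^m` with
`u ∈ ℤ_p^×`), the operator `γ - 1` is invertible on `ker(tr_m)`, and the operator norm of
its inverse equals `|ζ_{p^{m+1}} - 1|⁻¹ = p^{1/(p^m (p-1))}`. -/
theorem stmt7 (p : ℕ) [Fact p.Prime]
    (K : Type*) [NontriviallyNormedField K]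
    (ζ : ℕ → K)
    (hζ0 : ζ 0 = 1)
    (hζcompat : ∀ k : ℕ, ζ (k + 1) ^ p = ζ k)
    (hζ1 : ζ 1 ≠ 1)
    (hζnorm : ∀ (k : ℕ) (j : ℤ), 1 ≤ k → ¬ ((p : ℤ) ∣ j) →
      ‖ζ k ^ j - 1‖ = (p : ℝ) ^ (-((1 : ℝ) / ((p : ℝ) ^ (k - 1) * ((p : ℝ) - 1)))))
    (m : ℕ) (u : ℤ_[p]) (hu : ‖u‖ = 1) :
    -- `γ - 1` preserves `ker(tr_m)` …
    (∀ f : ℚ → K, memKerTrace p m f →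
      memKerTrace p m (fun q => gammaEig p ζ u q * f q - f q)) ∧
    -- … and is bijective on it,
    (∀ g : ℚ → K, memKerTrace p m g →
      ∃! f : ℚ → K, memKerTrace p m f ∧ (fun q => gammaEig p ζ u q * f q - f q) = g) ∧
    -- the inverse has operator norm at most `p^{1/(p^m(p-1))}` …
    (∀ g f : ℚ → K, memKerTrace p m g → memKerTrace p m f →
      (fun q => gammaEig p ζ u q * f q - f q) = g →
      (⨆ q : ℚ, ‖f q‖) ≤ (p : ℝ) ^ ((1 : ℝ) / ((p : ℝ) ^ m * ((p : ℝ) - 1))) * ⨆ q : ℚ, ‖g q‖) ∧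
    -- … and this constant is optimal: the operator norm equals `p^{1/(p^m(p-1))}` …
    (∀ C' : ℝ, 0 ≤ C' →
      (∀ g f : ℚ → K, memKerTrace p m g → memKerTrace p m f →
        (fun q => gammaEig p ζ u q * f q - f q) = g →
        (⨆ q : ℚ, ‖f q‖) ≤ C' * ⨆ q : ℚ, ‖g q‖) →
      (p : ℝ) ^ ((1 : ℝ) / ((p : ℝ) ^ m * ((p : ℝ) - 1))) ≤ C') ∧
    -- … which is `|ζ_{p^{m+1}} - 1|⁻¹`.
    (p : ℝ) ^ ((1 : ℝ) / ((p : ℝ) ^ m * ((p : ℝ) - 1))) = ‖ζ (m + 1) - 1‖⁻¹ :=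
  stmt7_general p K ζ hζnorm m u hu
end
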